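/- Every finite simple connected chordal graph can be reduced, through a finite sequence of erasures (each step deleting a single exposed edge of the current graph), to a spanning tree (a connected acyclic graph on the same vertex set). -/

import Mathlib

variable {V : Type*}

/-- A maximal clique of `G`: a clique not properly contained in any other clique. -/
def IsMaxClique (G : SimpleGraph V) (s : Set V) : Prop :=
  G.IsClique s ∧ ∀ t : Set V, G.IsClique t → s ⊆ t → t = s

/-- `xy` is a facet edge of `G` if it is an edge and `{x, y}` is a maximal clique. -/
def IsFacetEdge (G : SimpleGraph V) (x y : V) : Prop :=
  G.Adj x y ∧ IsMaxClique G {x, y}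

/-- `xy` is an exposed edge of `G` if it is an edge contained in a unique maximal
clique and it is not a facet edge. -/
def IsExposedEdge (G : SimpleGraph V) (x y : V) : Prop :=
  G.Adj x y ∧ (∃! s : Set V, IsMaxClique G s ∧ x ∈ s ∧ y ∈ s) ∧ ¬ IsFacetEdge G x y

/-- A graph is chordal if every cycle of length at least four has a chord, i.e. an
edge of the graph joining two vertices of the cycle which is not an edge of the cycle. -/
def IsChordal (G : SimpleGraph V) : Prop :=
  ∀ ⦃v : V⦄ (w : G.Walk v v), w.IsCycle → 4 ≤ w.length →
    ∃ a b, a ∈ w.support ∧ b ∈ w.support ∧ G.Adj a b ∧ s(a, b) ∉ w.edges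

/-- `H` is obtained from `G` through an erasure: deletion of a single exposed edge. -/
def Erasure (G H : SimpleGraph V) : Prop :=
  ∃ x y : V, IsExposedEdge G x y ∧ H = G.deleteEdges {s(x, y)}

/-!
Erasing an exposed edge `xy` keeps a graph connected, since the maximal clique through `xy` has a
third vertex, and keeps it chordal: a long chordless cycle of `G - xy` would have `xy` as its only
chord in `G`, which forces two distinct common neighbours of `x` and `y` on the cycle, and these
lie in the unique maximal clique through `xy`. So it suffices that a chordal graph with a cycle
has an exposed edge. Pendant vertices can be isolated without creating exposed edges; once there
are none, Dirac's lemma gives a simplicial vertex of degree at least two in the component of a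
cycle, and the edges at such a vertex are exposed.
-/

open SimpleGraph Walk

section Walks

variable {G : SimpleGraph V} {u v : V}

lemma SimpleGraph.spanningCoe_induce_adj {s : Set V} {a b : V} :
    (G.induce s).spanningCoe.Adj a b ↔ G.Adj a b ∧ a ∈ s ∧ b ∈ s := by
  simp [map_adj]

lemma SimpleGraph.Walk.support_subset_of_spanningCoe_induce {s : Set V}
    (p : (G.induce s).spanningCoe.Walk u v) (hu : u ∈ s) : ∀ z ∈ p.support, z ∈ s := by
  induction p with
  | nil => simpa
  | cons h p ih =>
    simp only [support_cons, List.mem_cons, forall_eq_or_imp]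
    exact ⟨hu, ih (spanningCoe_induce_adj.mp h).2.2⟩

lemma SimpleGraph.Walk.reachable_spanningCoe_induce {s : Set V} (p : G.Walk u v)
    (hp : ∀ z ∈ p.support, z ∈ s) : (G.induce s).spanningCoe.Reachable u v := by
  induction p with
  | nil => rfl
  | cons h p ih =>
    simp only [support_cons, List.mem_cons, forall_eq_or_imp] at hp
    exact (spanningCoe_induce_adj.mpr ⟨h, hp.1, hp.2 _ p.start_mem_support⟩).reachable.trans
      (ih hp.2)

lemma SimpleGraph.Walk.isChordless_of_length_eq_dist (p : G.Walk u v)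
    (hp : p.length = G.dist u v) : p.IsChordless := by
  classical
  induction p with
  | nil => simp [isChordless_iff_forall_mem_edges]
  | @cons u w v h p ih =>
    have hp' : p.length = G.dist w v := length_eq_dist_of_subwalk hp (isSubwalk_cons p h)
    -- a shortcut from `u` to a later vertex of `p` would beat the length of `cons h p`
    have hnbr : ∀ b ∈ p.support, G.Adj u b → b = w := by
      intro b hb hub
      by_contra hbw
      have := length_dropUntil_lt_length hb hbw
      have := dist_le (cons hub (p.dropUntil b hb))
      simp only [length_cons] at hp this
      omega
    rw [isChordless_iff_forall_mem_edges] at ih ⊢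
    intro a b ha hb hab
    simp only [support_cons, List.mem_cons, edges_cons] at ha hb ⊢
    rcases ha with rfl | ha <;> rcases hb with rfl | hb
    · exact absurd hab (G.loopless.irrefl _)
    · exact .inl (by rw [hnbr b hb hab])
    · exact .inl (by rw [hnbr a ha hab.symm, Sym2.eq_swap])
    · exact .inr (ih hp' ha hb hab)

lemma SimpleGraph.Walk.IsChordless.rotate [DecidableEq V] {c : G.Walk v v} (hc : c.IsChordless)
    (hu : u ∈ c.support) : (c.rotate u hu).IsChordless := by
  rw [isChordless_iff_forall_mem_edges] at hc ⊢
  intro a b ha hb hab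
  rw [(c.rotate_edges u hu).perm.mem_iff]
  exact hc ((c.mem_support_rotate_iff u hu).mp ha) ((c.mem_support_rotate_iff u hu).mp hb) hab

lemma SimpleGraph.Walk.IsCycle.eq_or_eq_of_mem_support_append {p : G.Walk u v}
    {q : G.Walk v u} (hc : (p.append q).IsCycle) {z : V} (hp : z ∈ p.support)
    (hq : z ∈ q.support) : z = u ∨ z = v := by
  have hdisj := (List.nodup_append'.mp (tail_support_append p q ▸ hc.support_nodup)).2.2
  rw [← p.cons_tail_support, List.mem_cons] at hp
  rw [← q.cons_tail_support, List.mem_cons] at hq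
  rcases hp with rfl | hp
  · exact .inl rfl
  rcases hq with rfl | hq
  · exact .inr rfl
  exact absurd hq (hdisj hp)

end Walks

section Exposed

variable {G G' : SimpleGraph V} {u v x y : V}

lemma SimpleGraph.IsClique.exists_isMaxClique_superset {s : Set V} (hs : G.IsClique s) :
    ∃ K, IsMaxClique G K ∧ s ⊆ K := by
  obtain ⟨K, hsK, hK⟩ := zorn_subset_nonempty {t | G.IsClique t}
    (fun c hc hchain _ => ⟨⋃₀ c, (isClique_sUnion hchain.directedOn).mpr hc,
      fun _ => Set.subset_sUnion_of_mem⟩) s hs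
  exact ⟨K, ⟨hK.prop, fun t ht hKt => (hK.eq_of_subset ht hKt).symm⟩, hsK⟩

lemma isExposedEdge_iff_of_le (hle : G' ≤ G)
    (h : ∀ K, G.IsClique K → x ∈ K → y ∈ K → G'.IsClique K) :
    IsExposedEdge G' x y ↔ IsExposedEdge G x y := by
  have hadj : G'.Adj x y ↔ G.Adj x y :=
    ⟨fun h' => hle h', fun h' => isClique_pair.mp
      (h _ (isClique_pair.mpr fun _ => h') (by simp) (by simp)) h'.ne⟩
  have hmax : ∀ K, x ∈ K → y ∈ K → (IsMaxClique G' K ↔ IsMaxClique G K) := fun K hx hy =>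
    ⟨fun hK => ⟨hK.1.mono hle, fun T hT hKT => hK.2 T (h T hT (hKT hx) (hKT hy)) hKT⟩,
      fun hK => ⟨h K hK.1 hx hy, fun T hT hKT => hK.2 T (hT.mono hle) hKT⟩⟩
  unfold IsExposedEdge IsFacetEdge
  rw [hadj, hmax _ (by simp) (by simp),
    existsUnique_congr fun K => and_congr_left fun hK => hmax K hK.1 hK.2]

lemma isExposedEdge_of_isClique_neighborSet {z : V} (hv : G.IsClique (G.neighborSet v))
    (hy : G.Adj v y) (hz : G.Adj v z) (hyz : y ≠ z) : IsExposedEdge G v y := by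
  set K := insert v (G.neighborSet v)
  have hK : G.IsClique K := isClique_insert.mpr ⟨hv, fun _ hb _ => hb⟩
  have hsub : ∀ T, G.IsClique T → v ∈ T → T ⊆ K := fun T hT hvT w hw =>
    (eq_or_ne w v).elim .inl fun hwv => .inr (hT hvT hw hwv.symm)
  have hmax : IsMaxClique G K :=
    ⟨hK, fun T hT hKT => (hsub T hT (hKT (Set.mem_insert v _))).antisymm hKT⟩
  refine ⟨hy, ⟨K, ⟨hmax, Set.mem_insert v _, .inr hy⟩,
    fun T hT => (hT.1.2 K hK (hsub T hT.1.1 hT.2.1)).symm⟩, fun hfacet => ?_⟩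
  have hKvy : K = {v, y} := hfacet.2.2 K hK (Set.insert_subset_insert (by simpa using hy))
  have hzK : z ∈ K := .inr hz
  rw [hKvy] at hzK
  rcases hzK with rfl | rfl
  exacts [hz.ne rfl, hyz rfl]

lemma IsExposedEdge.exists_adj_adj (h : IsExposedEdge G x y) :
    ∃ z, G.Adj x z ∧ G.Adj y z := by
  obtain ⟨hxy, ⟨K, ⟨hK, hxK, hyK⟩, -⟩, hfacet⟩ := h
  obtain ⟨z, hzK, hz⟩ : ∃ z ∈ K, z ∉ ({x, y} : Set V) := by
    by_contra! hKsub
    exact hfacet ⟨hxy, (Set.Subset.antisymm hKsub (Set.insert_subset hxK (by simpa))) ▸ hK⟩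
  simp only [Set.mem_insert_iff, Set.mem_singleton_iff, not_or] at hz
  exact ⟨z, hK.1 hxK hzK (Ne.symm hz.1), hK.1 hyK hzK (Ne.symm hz.2)⟩

/-- The common neighbours of the ends of an exposed edge lie in its unique maximal clique. -/
lemma IsExposedEdge.adj_of_adj_of_adj {t : V} (h : IsExposedEdge G x y) (hxu : G.Adj x u)
    (hyu : G.Adj y u) (hxt : G.Adj x t) (hyt : G.Adj y t) (hut : u ≠ t) : G.Adj u t := by
  obtain ⟨hxy, ⟨K, ⟨hK, -⟩, hKuniq⟩, -⟩ := h
  have mem_K : ∀ w, G.Adj x w → G.Adj y w → w ∈ K := by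
    intro w hxw hyw
    have hclique : G.IsClique {w, x, y} := by
      simp [isClique_insert, hxy, hxw.symm, hyw.symm]
    obtain ⟨K', hK', hsub⟩ := hclique.exists_isMaxClique_superset
    exact hKuniq K' ⟨hK', hsub (by simp), hsub (by simp)⟩ ▸ hsub (by simp)
  exact hK.1 (mem_K u hxu hyu) (mem_K t hxt hyt) hut

lemma IsExposedEdge.deleteEdges_lt (h : IsExposedEdge G x y) :
    G.deleteEdges {s(x, y)} < G :=
  (deleteEdges_le _).lt_of_ne fun heq =>
    (deleteEdges_eq_self.mp heq).notMem_of_mem_left (G.mem_edgeSet.mpr h.1) rfl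

lemma IsExposedEdge.connected_deleteEdges (h : IsExposedEdge G x y) (hG : G.Connected) :
    (G.deleteEdges {s(x, y)}).Connected := by
  refine hG.connected_delete_edge_of_not_isBridge (isBridge_iff.not_left.mpr ?_)
  obtain ⟨z, hxz, hyz⟩ := h.exists_adj_adj
  have hx : (G.deleteEdges {s(x, y)}).Adj x z := by simp [hxz, hyz.ne', h.1.ne]
  have hy : (G.deleteEdges {s(x, y)}).Adj z y := by simp [hyz.symm, hxz.ne', h.1.ne']
  exact hx.reachable.trans hy.reachable

end Exposed

section Chordal

variable {G : SimpleGraph V} {u v : V}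

lemma isChordal_iff_forall_isChordless :
    IsChordal G ↔ ∀ ⦃v : V⦄ (c : G.Walk v v), c.IsCycle → c.IsChordless → c.length ≤ 3 := by
  refine ⟨fun h v c hc hcl => ?_, fun h v c hc h4 => ?_⟩
  · by_contra! h4
    obtain ⟨a, b, ha, hb, hab, hnot⟩ := h c hc h4
    exact hnot (hcl.mem_edges ha hb hab)
  · by_contra! hcl
    have := h c hc (isChordless_iff_forall_mem_edges.mpr hcl)
    omega

/-- An induced path whose ends are adjacent closes up to a chordless cycle. -/
lemma IsChordal.length_le_two (hG : IsChordal G) {P : G.Walk u v} (hP : P.IsPath)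
    (hvu : G.Adj v u)
    (hind : ∀ a ∈ P.support, ∀ b ∈ P.support, G.Adj a b → s(a, b) ≠ s(u, v) → s(a, b) ∈ P.edges) :
    P.length ≤ 2 := by
  by_contra! h3
  have hnot : s(v, u) ∉ P.edges := fun h => by
    have := hP.length_eq_one_of_mem_edges (Sym2.eq_swap ▸ h)
    omega
  have hc : (cons hvu P).IsCycle := (cons_isCycle_iff P hvu).mpr ⟨hP, hnot⟩
  have mem_P : ∀ {w}, w ∈ (cons hvu P).support → w ∈ P.support := fun hw => by
    rw [support_cons, List.mem_cons] at hw
    exact hw.elim (· ▸ P.end_mem_support) id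
  have hcl : (cons hvu P).IsChordless := by
    refine isChordless_iff_forall_mem_edges.mpr fun a b ha hb hab => ?_
    rw [edges_cons, List.mem_cons]
    by_cases he : s(a, b) = s(u, v)
    · exact .inl (he.trans Sym2.eq_swap)
    · exact .inr (hind a (mem_P ha) b (mem_P hb) hab he)
  have := isChordal_iff_forall_isChordless.mp hG _ hc hcl
  rw [length_cons] at this
  omega

/-- A shortest such walk closes up through `a` to a chordless cycle. -/
lemma IsChordal.adj_of_walk (hG : IsChordal G) {a s t : V} (p : G.Walk s t)
    (hap : a ∉ p.support) (hnbr : ∀ z ∈ p.support, G.Adj a z → z = s ∨ z = t)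
    (has : G.Adj a s) (hat : G.Adj a t) (hst : s ≠ t) : G.Adj s t := by
  set W : Set V := {z | z ∈ p.support}
  obtain ⟨q, hq⟩ := (p.reachable_spanningCoe_induce (s := W) fun _ => id).exists_walk_length_eq_dist
  have hqW := q.support_subset_of_spanningCoe_induce p.start_mem_support
  have hqcl := q.isChordless_of_length_eq_dist hq
  set Q : G.Walk a t := cons has (q.mapLe (spanningCoe_induce_le G W))
  have hQ : Q.IsPath :=
    ((q.isPath_of_length_eq_dist hq).mapLe _).cons (by simpa using fun h => hap (hqW a h))
  have hnbr' : ∀ y ∈ q.support, G.Adj a y → s(a, y) ≠ s(a, t) → y = s := fun y hy hay hne =>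
    (hnbr y (hqW y hy) hay).resolve_right (by rintro rfl; exact hne rfl)
  have hQlen := hG.length_le_two hQ hat.symm fun x hx y hy hxy hne => by
    simp only [Q, support_cons, support_mapLe_eq_support, List.mem_cons] at hx hy
    simp only [Q, edges_cons, edges_mapLe_eq_edges, List.mem_cons]
    rcases hx with rfl | hx <;> rcases hy with rfl | hy
    · exact absurd hxy (G.loopless.irrefl _)
    · exact .inl (by rw [hnbr' y hy hxy hne])
    · exact .inl (by rw [hnbr' x hx hxy.symm (by rwa [Sym2.eq_swap]), Sym2.eq_swap])
    · exact .inr (hqcl.mem_edges hx hy (spanningCoe_induce_adj.mpr ⟨hxy, hqW x hx, hqW y hy⟩))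
  have hq1 : q.length = 1 := by
    simp only [Q, length_cons, length_mapLe] at hQlen
    have := mt q.eq_of_length_eq_zero hst
    omega
  exact (spanningCoe_induce_adj.mp (exists_length_eq_one_iff.mp ⟨q, hq1⟩)).1

def IsSimplicialIn (G : SimpleGraph V) (A : Set V) (v : V) : Prop :=
  G.IsClique (G.neighborSet v ∩ A)

lemma exists_isSimplicialIn_notMem_of_isClique {A S : Set V}
    (hA : ∀ a ∈ A, ∀ b ∈ A, a ≠ b → ¬ G.Adj a b →
      ∃ v ∈ A, v ≠ a ∧ ¬ G.Adj a v ∧ IsSimplicialIn G A v)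
    (hS : G.IsClique S) {c : V} (hc : c ∈ A) (hcS : c ∉ S) :
    ∃ v ∈ A, v ∉ S ∧ IsSimplicialIn G A v := by
  by_cases hAc : G.IsClique A
  · exact ⟨c, hc, hcS, hAc.subset Set.inter_subset_right⟩
  obtain ⟨p, hp, q, hq, hpq, hnadj⟩ : ∃ p ∈ A, ∃ q ∈ A, p ≠ q ∧ ¬ G.Adj p q := by
    simpa [IsClique, Set.Pairwise] using hAc
  obtain ⟨v, hv, hvp, hpv, hsv⟩ := hA p hp q hq hpq hnadj
  by_cases hvS : v ∈ S
  · obtain ⟨w, hw, hwv, hvw, hsw⟩ := hA v hv p hp hvp fun h => hpv h.symm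
    exact ⟨w, hw, fun hwS => hvw (hS hvS hwS hwv.symm), hsw⟩
  · exact ⟨v, hv, hvS, hsv⟩

/-- Dirac's lemma, relative to a vertex set `A`: the simplicial vertex is found in the component
`C` of `b` in `A` minus the closed neighbourhood of `a`, whose neighbourhood `S` in `A` is a
clique; induction is applied to `C ∪ S`. -/
theorem IsChordal.exists_isSimplicialIn [Finite V] (hG : IsChordal G) {A : Set V} {a b : V}
    (ha : a ∈ A) (hb : b ∈ A) (hab : a ≠ b) (hnadj : ¬ G.Adj a b) :
    ∃ v ∈ A, v ≠ a ∧ ¬ G.Adj a v ∧ IsSimplicialIn G A v := by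
  induction A using WellFoundedLT.induction generalizing a b with
  | _ A ih =>
  classical
  set U := {x ∈ A | x ≠ a ∧ ¬ G.Adj a x}
  set C := {x | (G.induce U).spanningCoe.Reachable b x}
  set S := {s ∈ A | s ∉ C ∧ ∃ c ∈ C, G.Adj s c}
  have hbC : b ∈ C := Reachable.refl b
  have hCU : C ⊆ U := fun x ⟨p⟩ =>
    p.support_subset_of_spanningCoe_induce ⟨hb, hab.symm, hnadj⟩ x p.end_mem_support
  have hSa : ∀ s ∈ S, G.Adj a s := by
    rintro s ⟨hsA, hsC, c, hc, hsc⟩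
    by_contra has
    have hsa : s ≠ a := fun h => (hCU hc).2.2 (h ▸ hsc)
    exact hsC (hc.trans (spanningCoe_induce_adj.mpr ⟨hsc.symm, hCU hc, hsA, hsa, has⟩).reachable)
  have hS : G.IsClique S := by
    intro s hs t ht hst
    obtain ⟨c, hc, hsc⟩ := hs.2.2
    obtain ⟨d, hd, htd⟩ := ht.2.2
    obtain ⟨w⟩ : (G.induce U).spanningCoe.Reachable c d := hc.symm.trans hd
    have hwC : ∀ z ∈ w.support, z ∈ C := fun z hz => hc.trans (w.takeUntil z hz).reachable
    refine hG.adj_of_walk (cons hsc ((w.mapLe (spanningCoe_induce_le G U)).concat htd.symm))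
      ?_ ?_ (hSa s hs) (hSa t ht) hst
    · simp only [support_cons, support_concat, support_mapLe_eq_support, List.mem_cons,
        List.mem_append, List.mem_nil_iff, or_false, not_or]
      exact ⟨(hSa s hs).ne, fun h => (hCU (hwC a h)).2.1 rfl, (hSa t ht).ne⟩
    · simp only [support_cons, support_concat, support_mapLe_eq_support, List.mem_cons,
        List.mem_append, List.mem_nil_iff, or_false]
      rintro z (rfl | hz | rfl) haz
      exacts [.inl rfl, absurd haz (hCU (hwC z hz)).2.2, .inr rfl]
  have hlt : C ∪ S < A := (Set.ssubset_iff_of_subset (Set.union_subset (fun x hx => (hCU hx).1)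
    fun s hs => hs.1)).mpr ⟨a, ha, fun h => h.elim (fun h => (hCU h).2.1 rfl)
      fun h => G.loopless.irrefl a (hSa a h)⟩
  obtain ⟨v, hv, hvS, hsimp⟩ := exists_isSimplicialIn_notMem_of_isClique
    (fun p hp q hq hpq hn => ih _ hlt hp hq hpq hn) hS (Or.inl hbC) fun h => h.2.1 hbC
  have hvC : v ∈ C := hv.resolve_right hvS
  refine ⟨v, (hCU hvC).1, (hCU hvC).2.1, (hCU hvC).2.2, hsimp.subset ?_⟩
  rintro x ⟨hvx, hxA⟩
  by_cases hxC : x ∈ C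
  exacts [⟨hvx, .inl hxC⟩, ⟨hvx, .inr ⟨hxA, hxC, v, hvC, hvx.symm⟩⟩]

end Chordal

section Erasure

variable {G : SimpleGraph V} {u v w x y : V}

lemma SimpleGraph.Walk.mem_support_of_not_nil {p : G.Walk u w} (hp : ¬ p.Nil) {z : V}
    (hz : z ∈ p.support) : z ∈ G.support := by
  obtain ⟨e, he, hze⟩ := (mem_support_iff_exists_mem_edges_of_not_nil hp).mp hz
  induction e using Sym2.ind with
  | _ a b =>
    rcases Sym2.mem_iff.mp hze with rfl | rfl
    exacts [⟨b, p.adj_of_mem_edges he⟩, ⟨a, (p.adj_of_mem_edges he).symm⟩]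

lemma SimpleGraph.Walk.IsCycle.exists_adj_adj_ne [DecidableEq V] {c : G.Walk u u}
    (hc : c.IsCycle) (hv : v ∈ c.support) : ∃ y z, G.Adj v y ∧ G.Adj v z ∧ y ≠ z := by
  have hc' := hc.rotate hv
  exact ⟨_, _, (c.rotate v hv).adj_snd hc'.not_nil,
    ((c.rotate v hv).adj_penultimate hc'.not_nil).symm, hc'.snd_ne_penultimate⟩

lemma SimpleGraph.Walk.adj_getVert_one_of_length_eq_two {p : G.Walk u v} (hp : p.length = 2) :
    G.Adj u (p.getVert 1) ∧ G.Adj (p.getVert 1) v := by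
  have h0 := p.adj_getVert_succ (i := 0) (by omega)
  have h1 := p.adj_getVert_succ (i := 1) (by omega)
  rw [getVert_zero] at h0
  rw [show 1 + 1 = p.length by omega, getVert_length] at h1
  exact ⟨h0, h1⟩

lemma SimpleGraph.Walk.IsCycle.isChordless_of_append {p : G.Walk u v} {q : G.Walk v u}
    (hc : (p.append q).IsCycle) (hcl : (p.append q).IsChordless) (huv : ¬ G.Adj u v) :
    p.IsChordless ∧ q.IsChordless := by
  have hshared : ∀ {a b}, a ∈ p.support → a ∈ q.support → b ∈ p.support → b ∈ q.support →
      ¬ G.Adj a b := by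
    intro a b hap haq hbp hbq hab
    rcases hc.eq_or_eq_of_mem_support_append hap haq with rfl | rfl <;>
      rcases hc.eq_or_eq_of_mem_support_append hbp hbq with rfl | rfl
    exacts [hab.ne rfl, huv hab, huv hab.symm, hab.ne rfl]
  have hmem : ∀ {a b}, a ∈ p.support ∨ a ∈ q.support → b ∈ p.support ∨ b ∈ q.support →
      G.Adj a b → s(a, b) ∈ p.edges ∨ s(a, b) ∈ q.edges := fun ha hb hab =>
    List.mem_append.mp (edges_append p q ▸ hcl.mem_edges ((mem_support_append_iff p q).mpr ha)
      ((mem_support_append_iff p q).mpr hb) hab)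
  refine ⟨isChordless_iff_forall_mem_edges.mpr fun a b ha hb hab => ?_,
    isChordless_iff_forall_mem_edges.mpr fun a b ha hb hab => ?_⟩
  · exact (hmem (.inl ha) (.inl hb) hab).resolve_right fun he => hshared ha
      (q.fst_mem_support_of_mem_edges he) hb (q.snd_mem_support_of_mem_edges he) hab
  · exact (hmem (.inr ha) (.inr hb) hab).resolve_left fun he => hshared
      (p.fst_mem_support_of_mem_edges he) ha (p.snd_mem_support_of_mem_edges he) hb hab

lemma IsChordal.deleteIncidenceSet (hG : IsChordal G) (v : V) :
    IsChordal (G.deleteIncidenceSet v) := by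
  refine isChordal_iff_forall_isChordless.mpr fun r c hc hcl => ?_
  have hle := G.deleteIncidenceSet_le v
  have hne : ∀ z ∈ c.support, z ≠ v := fun z hz =>
    (support_deleteIncidenceSet_subset G v (c.mem_support_of_not_nil hc.not_nil hz)).2
  have := isChordal_iff_forall_isChordless.mp hG (c.mapLe hle) (hc.mapLe hle)
    (isChordless_iff_forall_mem_edges.mpr fun a b ha hb hab => by
      rw [support_mapLe_eq_support] at ha hb
      rw [edges_mapLe_eq_edges]
      exact hcl.mem_edges ha hb (deleteIncidenceSet_adj.mpr ⟨hab, hne a ha, hne b hb⟩))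
  rwa [length_mapLe] at this

lemma IsExposedEdge.of_deleteIncidenceSet (hv : G.neighborSet v = {u})
    (h : IsExposedEdge (G.deleteIncidenceSet v) x y) : IsExposedEdge G x y := by
  obtain ⟨hxy, hxv, hyv⟩ := deleteIncidenceSet_adj.mp h.1
  refine (isExposedEdge_iff_of_le (G.deleteIncidenceSet_le v) fun K hK hxK hyK => ?_).mp h
  have hvK : v ∉ K := fun hvK => by
    have hx : x ∈ G.neighborSet v := hK hvK hxK hxv.symm
    have hy : y ∈ G.neighborSet v := hK hvK hyK hyv.symm
    rw [hv] at hx hy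
    exact hxy.ne (hx.trans hy.symm)
  exact fun a ha b hb hab => deleteIncidenceSet_adj.mpr
    ⟨hK ha hb hab, fun h => hvK (h ▸ ha), fun h => hvK (h ▸ hb)⟩

lemma IsChordal.exists_isExposedEdge_of_forall_neighborSet_ne_singleton [Finite V]
    (hG : IsChordal G) {r : V} {c : G.Walk r r} (hc : c.IsCycle)
    (hpend : ∀ v u, G.neighborSet v ≠ {u}) : ∃ x y, IsExposedEdge G x y := by
  classical
  set A := {z | G.Reachable r z}
  have hnbrA : ∀ z ∈ A, G.neighborSet z ⊆ A := fun z hz w hw => Reachable.trans hz hw.reachable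
  by_cases hA : G.IsClique A
  · obtain ⟨y, z, hy, hz, hyz⟩ := hc.exists_adj_adj_ne c.start_mem_support
    exact ⟨r, y, isExposedEdge_of_isClique_neighborSet (hA.subset (hnbrA r .rfl)) hy hz hyz⟩
  obtain ⟨a, ha, b, hb, hab, hnadj⟩ : ∃ a ∈ A, ∃ b ∈ A, a ≠ b ∧ ¬ G.Adj a b := by
    simpa [IsClique, Set.Pairwise] using hA
  obtain ⟨v, hv, hva, -, hsimp⟩ := hG.exists_isSimplicialIn ha hb hab hnadj
  rw [IsSimplicialIn, Set.inter_eq_left.mpr (hnbrA v hv)] at hsimp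
  obtain ⟨p⟩ : G.Reachable v a := Reachable.trans (Reachable.symm hv) ha
  have hy := p.adj_snd (not_nil_of_ne hva)
  obtain ⟨z, hz, hzy⟩ : ∃ z ∈ G.neighborSet v, z ≠ p.snd := by
    by_contra! h
    exact hpend v p.snd (Set.eq_singleton_iff_unique_mem.mpr ⟨hy, h⟩)
  exact ⟨v, p.snd, isExposedEdge_of_isClique_neighborSet hsimp hy hz hzy.symm⟩

theorem IsChordal.exists_isExposedEdge [Finite V] (hG : IsChordal G) (hcyc : ¬ G.IsAcyclic) :
    ∃ x y, IsExposedEdge G x y := by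
  classical
  induction G using WellFoundedLT.induction with
  | _ G ih =>
  obtain ⟨r, c, hc⟩ : ∃ r, ∃ c : G.Walk r r, c.IsCycle := by simpa [IsAcyclic] using hcyc
  by_cases hpend : ∃ v u, G.neighborSet v = {u}
  · obtain ⟨v, u, hvu⟩ := hpend
    have hvc : v ∉ c.support := fun hv => by
      obtain ⟨y, z, hy, hz, hyz⟩ := hc.exists_adj_adj_ne hv
      have hy' : y ∈ G.neighborSet v := hy
      have hz' : z ∈ G.neighborSet v := hz
      rw [hvu] at hy' hz'
      exact hyz (hy'.trans hz'.symm)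
    have hedges : ∀ e ∈ c.edges, e ∈ (G.deleteIncidenceSet v).edgeSet := fun e he => by
      rw [edgeSet_deleteIncidenceSet]
      exact ⟨c.edges_subset_edgeSet he, fun hve => hvc (c.mem_support_of_mem_edges he hve.2)⟩
    have hlt : G.deleteIncidenceSet v < G := (G.deleteIncidenceSet_le v).lt_of_ne fun heq => by
      have hadj : G.Adj v u := by simp [← mem_neighborSet, hvu]
      rw [← heq, deleteIncidenceSet_adj] at hadj
      exact hadj.2.1 rfl
    obtain ⟨x, y, hxy⟩ := ih _ hlt (hG.deleteIncidenceSet v)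
      fun hacyc => hacyc _ (hc.transfer hedges)
    exact ⟨x, y, hxy.of_deleteIncidenceSet hvu⟩
  · push Not at hpend
    exact hG.exists_isExposedEdge_of_forall_neighborSet_ne_singleton hc hpend

lemma IsChordal.length_eq_two_of_deleteEdges (hG : IsChordal G) (hxy : G.Adj x y)
    {P : (G.deleteEdges {s(x, y)}).Walk u w} (huw : s(u, w) = s(x, y)) (hP : P.IsPath)
    (hcl : P.IsChordless) : P.length = 2 := by
  have hwu : G.Adj w u := by rw [← G.mem_edgeSet, Sym2.eq_swap, huw]; exact hxy
  have hle := G.deleteEdges_le {s(x, y)}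
  have h2 := hG.length_le_two (hP.mapLe hle) hwu fun a ha b hb hab hne => by
    rw [support_mapLe_eq_support] at ha hb
    rw [edges_mapLe_eq_edges]
    exact hcl.mem_edges ha hb (by simp [hab, ← huw, hne])
  rw [length_mapLe] at h2
  have h0 := mt P.eq_of_length_eq_zero hwu.ne'
  have h1 : P.length ≠ 1 := fun h1 => by
    simpa [huw] using exists_length_eq_one_iff.mp ⟨P, h1⟩
  omega

/-- Both arcs of the cycle between `x` and `y` are chordless paths in `G - xy` closed by the edge
`xy` of the chordal graph `G`, so they have length two; their midpoints are distinct common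
neighbours of `x` and `y`, hence adjacent, which gives a chord. -/
lemma IsExposedEdge.not_isChordless [DecidableEq V] (h : IsExposedEdge G x y) (hG : IsChordal G)
    {c : (G.deleteEdges {s(x, y)}).Walk x x} (hc : c.IsCycle) (hy : y ∈ c.support) :
    ¬ c.IsChordless := by
  intro hcl
  set P := c.takeUntil y hy
  set Q := c.dropUntil y hy
  rw [← c.take_spec hy] at hc hcl
  have hnadj : ¬ (G.deleteEdges {s(x, y)}).Adj x y := by simp
  obtain ⟨hPcl, hQcl⟩ := hc.isChordless_of_append hcl hnadj
  have hxy := h.1.ne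
  have hP := hG.length_eq_two_of_deleteEdges h.1 rfl
    (hc.isPath_of_append_left (not_nil_of_ne hxy.symm)) hPcl
  have hQ := hG.length_eq_two_of_deleteEdges h.1 Sym2.eq_swap
    (hc.isPath_of_append_right (not_nil_of_ne hxy)) hQcl
  obtain ⟨hxm, hmy⟩ := P.adj_getVert_one_of_length_eq_two hP
  obtain ⟨hyn, hnx⟩ := Q.adj_getVert_one_of_length_eq_two hQ
  have hmQ : P.getVert 1 ∉ Q.support := fun hm =>
    (hc.eq_or_eq_of_mem_support_append (P.getVert_mem_support 1) hm).elim
      (fun h => hxm.ne h.symm) fun h => hmy.ne h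
  have hnP : Q.getVert 1 ∉ P.support := fun hn =>
    (hc.eq_or_eq_of_mem_support_append hn (Q.getVert_mem_support 1)).elim
      (fun h => hnx.ne h) fun h => hyn.ne h.symm
  have hmn := h.adj_of_adj_of_adj (deleteEdges_adj.mp hxm).1 (deleteEdges_adj.mp hmy).1.symm
    (deleteEdges_adj.mp hnx).1.symm (deleteEdges_adj.mp hyn).1
    fun e => hmQ (e ▸ Q.getVert_mem_support 1)
  have hmn' : (G.deleteEdges {s(x, y)}).Adj (P.getVert 1) (Q.getVert 1) := by
    simp [hmn, hxm.ne', hmy.ne]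
  have := hcl.mem_edges ((mem_support_append_iff P Q).mpr (.inl (P.getVert_mem_support 1)))
    ((mem_support_append_iff P Q).mpr (.inr (Q.getVert_mem_support 1))) hmn'
  rw [edges_append, List.mem_append] at this
  exact this.elim (fun he => hnP (P.snd_mem_support_of_mem_edges he))
    fun he => hmQ (Q.fst_mem_support_of_mem_edges he)

lemma IsExposedEdge.isChordal_deleteEdges (h : IsExposedEdge G x y) (hG : IsChordal G) :
    IsChordal (G.deleteEdges {s(x, y)}) := by
  classical
  refine isChordal_iff_forall_isChordless.mpr fun r c hc hcl => ?_
  by_contra! h4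
  have hle := G.deleteEdges_le {s(x, y)}
  obtain ⟨a, b, ha, hb, hab, hnot⟩ := hG (c.mapLe hle) (hc.mapLe hle) (by rw [length_mapLe]; omega)
  rw [support_mapLe_eq_support] at ha hb
  rw [edges_mapLe_eq_edges] at hnot
  have hab' : s(a, b) = s(x, y) := by
    by_contra hne
    exact hnot (hcl.mem_edges ha hb (by simp [hab, hne]))
  obtain ⟨hx, hy⟩ : x ∈ c.support ∧ y ∈ c.support := by
    rcases Sym2.eq_iff.mp hab' with ⟨rfl, rfl⟩ | ⟨rfl, rfl⟩
    exacts [⟨ha, hb⟩, ⟨hb, ha⟩]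
  exact h.not_isChordless hG (hc.rotate hx) ((c.mem_support_rotate_iff x hx).mpr hy)
    (hcl.rotate hx)

end Erasure

/-- Every finite connected chordal graph can be reduced through a finite sequence of
erasures to a spanning tree. -/
theorem erasure_to_spanning_tree [Fintype V] (G : SimpleGraph V)
    (hconn : G.Connected) (hchord : IsChordal G) :
    ∃ T : SimpleGraph V, T.IsTree ∧ Relation.ReflTransGen Erasure G T := by
  induction G using WellFoundedLT.induction with
  | _ G ih =>
  by_cases hacyc : G.IsAcyclic
  · exact ⟨G, ⟨hconn, hacyc⟩, .refl⟩
  obtain ⟨x, y, hxy⟩ := hchord.exists_isExposedEdge hacyc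
  obtain ⟨T, hT, hGT⟩ := ih _ hxy.deleteEdges_lt (hxy.connected_deleteEdges hconn)
    (hxy.isChordal_deleteEdges hchord)
  exact ⟨T, hT, .head ⟨x, y, hxy, rfl⟩ hGT⟩
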